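/- arXiv:1612.07962 — 2 statements merged into one kernel-verified Lean document; each statement's English description precedes it below -/
import Mathlib

section
/- If a polynomial map F : ℝⁿ → ℝⁿ (each component a polynomial) has a polynomial inverse G : ℝⁿ → ℝⁿ, then the Jacobian determinant det(J_F(x)) is a nonzero constant, i.e., there exists c ∈ ℝ, c ≠ 0, such that det(J_F(x)) = c for all x ∈ ℝⁿ. -/
/-!
Evaluating `G ∘ F = id` at every point of the infinite field `ℝ` gives the polynomial identity
`G(F(X)) = X`. The formal chain rule turns it into `J_G(F) · J_F = 1` over `ℝ[X]`, so `det J_F`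
is a unit of `ℝ[X]`, i.e. a nonzero constant.
-/

namespace MvPolynomial

variable {R σ τ ι : Type*}

theorem pderiv_aeval [CommSemiring R] [Fintype σ] (F : σ → MvPolynomial τ R) (j : τ)
    (p : MvPolynomial σ R) :
    pderiv j (aeval F p) = ∑ k, aeval F (pderiv k p) * pderiv j (F k) := by
  classical
  induction p using MvPolynomial.induction_on with
  | C a => simp
  | add p q hp hq => simp only [map_add, hp, hq, ← Finset.sum_add_distrib, add_mul]
  | mul_X p i hp =>
    simp only [map_mul, aeval_X, Derivation.leibniz, pderiv_X, smul_eq_mul, map_add, hp,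
      add_mul, Finset.sum_add_distrib, Finset.mul_sum]
    congr 1
    · simp [Pi.single_apply]
    · exact Finset.sum_congr rfl fun k _ => by ring

noncomputable def jacobian [CommSemiring R] (F : σ → MvPolynomial τ R) :
    Matrix σ τ (MvPolynomial τ R) :=
  Matrix.of fun i j => pderiv j (F i)

theorem jacobian_X [CommSemiring R] [DecidableEq σ] :
    jacobian (X : σ → MvPolynomial σ R) = 1 := by
  ext i j
  simp [jacobian, pderiv_X, Matrix.one_apply, Pi.single_apply]

theorem jacobian_aeval [CommSemiring R] [Fintype σ] (F : σ → MvPolynomial τ R)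
    (G : ι → MvPolynomial σ R) :
    jacobian (fun i => aeval F (G i)) = (jacobian G).map (aeval F) * jacobian F := by
  ext i j : 1
  simpa [jacobian, Matrix.mul_apply] using pderiv_aeval F j (G i)

theorem isUnit_det_jacobian_of_aeval_eq_X [CommRing R] [Fintype σ] [DecidableEq σ]
    {F G : σ → MvPolynomial σ R} (h : ∀ i, aeval F (G i) = X i) :
    IsUnit (jacobian F).det := by
  have hJ := congrArg Matrix.det (jacobian_aeval F G)
  rw [_root_.funext h, jacobian_X, Matrix.det_one, Matrix.det_mul] at hJ
  exact IsUnit.of_mul_eq_one_right _ hJ.symm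

end MvPolynomial

open MvPolynomial

theorem stmt1_general (n : ℕ) (F G : Fin n → MvPolynomial (Fin n) ℝ)
    (hGF : ∀ x : Fin n → ℝ,
      (fun i => MvPolynomial.eval (fun j => MvPolynomial.eval x (F j)) (G i)) = x) :
    ∃ c : ℝ, c ≠ 0 ∧ ∀ x : Fin n → ℝ,
      (Matrix.of fun i j => MvPolynomial.eval x (MvPolynomial.pderiv j (F i))).det = c := by
  have hGF_poly : ∀ i, aeval F (G i) = X i := fun i => MvPolynomial.funext fun x => by
    rw [aeval_eq_bind₁, eval_X]
    exact (eval₂Hom_bind₁ _ x F (G i)).trans (congrFun (hGF x) i)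
  obtain ⟨c, hc, hdet⟩ :=
    isUnit_iff_eq_C_of_isReduced.mp (isUnit_det_jacobian_of_aeval_eq_X hGF_poly)
  refine ⟨c, hc.ne_zero, fun x => ?_⟩
  calc (Matrix.of fun i j => eval x (pderiv j (F i))).det
      = eval x (jacobian F).det := (RingHom.map_det _ _).symm
    _ = c := by rw [hdet, eval_C]

theorem stmt1 (n : ℕ) (F G : Fin n → MvPolynomial (Fin n) ℝ)
    (hGF : ∀ x : Fin n → ℝ,
      (fun i => MvPolynomial.eval (fun j => MvPolynomial.eval x (F j)) (G i)) = x)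
    (hFG : ∀ y : Fin n → ℝ,
      (fun i => MvPolynomial.eval (fun j => MvPolynomial.eval y (G j)) (F i)) = y) :
    ∃ c : ℝ, c ≠ 0 ∧ ∀ x : Fin n → ℝ,
      (Matrix.of fun i j => MvPolynomial.eval x (MvPolynomial.pderiv j (F i))).det = c :=
  stmt1_general n F G hGF
end

section
/- The field of fractions of the ℝ-algebra generated by the rational functions x₂, x₁/(x₁+2), and −2x₁/(x₁+2)³ (as elements of ℝ(x₁, x₂)) equals the full field of rational functions ℝ(x₁, x₂); in particular both x₁ and x₂ lie in this subfield. -/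
lemma stmt9_aux {F : Type*} [Field F] [CharZero F] (x : F) (hx : x ≠ 0) (hd : x + 2 ≠ 0) :
    x = ((-2 * (x / (x + 2)) / (-2 * x / (x + 2) ^ 3)) * (1 - x / (x + 2)) - 4) / 2 := by
  have h1 : (-2 * x / (x + 2) ^ 3 : F) ≠ 0 :=
    div_ne_zero (mul_ne_zero (by norm_num) hx) (pow_ne_zero _ hd)
  have key : (-2 * (x / (x + 2)) / (-2 * x / (x + 2) ^ 3) : F) = (x + 2) ^ 2 := by
    rw [div_eq_iff h1]
    field_simp
  rw [key]
  field_simp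
  ring

theorem stmt9 :
    let R := MvPolynomial (Fin 2) ℝ
    let F := FractionRing R
    let X1 : F := algebraMap R F (MvPolynomial.X 0)
    let X2 : F := algebraMap R F (MvPolynomial.X 1)
    let S : Set F := {X2, X1 / (X1 + 2), -2 * X1 / (X1 + 2) ^ 3}
    IntermediateField.adjoin ℝ S = ⊤ ∧
    X1 ∈ IntermediateField.adjoin ℝ S ∧ X2 ∈ IntermediateField.adjoin ℝ S := by
  intro R F X1 X2 S
  set K := IntermediateField.adjoin ℝ S with hK
  have hinj : Function.Injective (algebraMap R F) := IsFractionRing.injective R F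
  have hX1ne : X1 ≠ 0 := by
    simp only [X1]
    rw [← map_zero (algebraMap R F)]
    exact fun h => MvPolynomial.X_ne_zero _ (hinj h)
  have hden : (X1 + 2 : F) ≠ 0 := by
    have heq : (X1 + 2 : F) = algebraMap R F (MvPolynomial.X 0 + 2) := by
      simp [X1, map_add, map_ofNat]
    rw [heq, ← map_zero (algebraMap R F)]
    intro h
    have h2 := hinj h
    have h3 := congrArg MvPolynomial.constantCoeff h2
    simp [map_ofNat] at h3
  have ha : X1 / (X1 + 2) ∈ K := IntermediateField.subset_adjoin ℝ S (by simp [S])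
  have hb : -2 * X1 / (X1 + 2) ^ 3 ∈ K := IntermediateField.subset_adjoin ℝ S (by simp [S])
  have hX2 : X2 ∈ K := IntermediateField.subset_adjoin ℝ S (by simp [S])
  have h4 : (4 : F) ∈ K := by
    rw [← map_ofNat (algebraMap ℝ F) 4]; exact K.algebraMap_mem _
  have h2 : (2 : F) ∈ K := by
    rw [← map_ofNat (algebraMap ℝ F) 2]; exact K.algebraMap_mem _
  have hm2 : (-2 : F) ∈ K := by
    rw [show (-2 : F) = -(2:F) by ring, ← map_ofNat (algebraMap ℝ F) 2]
    exact K.neg_mem (K.algebraMap_mem _)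
  have hX1 : X1 ∈ K := by
    rw [stmt9_aux X1 hX1ne hden]
    exact K.div_mem (K.sub_mem (K.mul_mem (K.div_mem (K.mul_mem hm2 ha) hb)
      (K.sub_mem K.one_mem ha)) h4) h2
  have hpoly : ∀ p : R, algebraMap R F p ∈ K := by
    intro p
    induction p using MvPolynomial.induction_on with
    | C a => exact K.algebraMap_mem a
    | add p q hp hq => rw [map_add]; exact K.add_mem hp hq
    | mul_X p i hp =>
      rw [map_mul]
      refine K.mul_mem hp ?_
      fin_cases i
      · exact hX1
      · exact hX2
  have htop : K = ⊤ := by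
    rw [eq_top_iff]
    intro f _
    obtain ⟨p, q, -, hpq⟩ := IsFractionRing.div_surjective (A := R) f
    rw [← hpq]
    exact K.div_mem (hpoly p) (hpoly q)
  exact ⟨htop, hX1, hX2⟩
end
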